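/- Let χ : ℝ → ℝ be a smooth compactly supported function and for ε > 0 and δ = (δ_{m+1},…,δ_n) with δ_j ≥ 0, define ψ_{ε,δ}(z) = χ(‖z‖²/ε²)·∑_{j=m+1}^n δ_j y_j² on ℂⁿ. Then there exists a constant M > 0, depending only on χ and n but not on ε or δ, such that the Levi form satisfies L_z(ψ_{ε,δ}; w) ≥ −M·δ_max·‖w‖² for all z, w ∈ ℂⁿ, where δ_max = max_j δ_j. -/

import Mathlib

open Complex

variable {n : ℕ}

/-- The Levi form of a real-valued `C²` function `f` at `z` in the complex direction `w`,
expressed via the real second derivative: `L_z(f; w) = (1/4)(D²f(z)[w,w] + D²f(z)[iw,iw])`. -/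
noncomputable def leviForm (f : EuclideanSpace ℂ (Fin n) → ℝ)
    (z w : EuclideanSpace ℂ (Fin n)) : ℝ :=
  (1 / 4) * (iteratedFDeriv ℝ 2 f z ![w, w]
    + iteratedFDeriv ℝ 2 f z ![Complex.I • w, Complex.I • w])

set_option maxHeartbeats 1000000 in
/-- For a smooth compactly supported `χ : ℝ → ℝ` there is `M > 0`, depending only on `χ`
and `n` (not on `ε` or `δ`), such that for `ψ_{ε,δ}(z) = χ(‖z‖²/ε²)·∑_{j≥m} δ_j y_j²` with
`δ_j ≥ 0`, the Levi form satisfies `L_z(ψ_{ε,δ}; w) ≥ −M·δ_max·‖w‖²` for all `z, w`. -/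
theorem stmt3 (χ : ℝ → ℝ) (hχ : ContDiff ℝ (⊤ : ℕ∞) χ) (hχc : HasCompactSupport χ) (m : ℕ) :
    ∃ M > (0 : ℝ), ∀ (ε : ℝ), 0 < ε → ∀ (δ : Fin n → ℝ), (∀ j, 0 ≤ δ j) →
      ∀ (δmax : ℝ), 0 ≤ δmax → (∀ j, δ j ≤ δmax) →
      ∀ z w : EuclideanSpace ℂ (Fin n),
        -M * δmax * ‖w‖ ^ 2 ≤
          leviForm (fun z => χ (‖z‖ ^ 2 / ε ^ 2) *
            ∑ j : Fin n, (if m ≤ (j : ℕ) then δ j * (z j).im ^ 2 else 0)) z w := by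
  classical
  set Φ : Fin n → EuclideanSpace ℂ (Fin n) → ℝ :=
    fun j z => χ (‖z‖ ^ 2) * (z j).im ^ 2 with hΦdef
  have hΦdiff : ∀ j, ContDiff ℝ (⊤ : ℕ∞) (Φ j) := by
    intro j
    apply ContDiff.mul
    · exact hχ.comp (contDiff_norm_sq ℂ)
    · exact (Complex.imCLM.contDiff.comp
        ((EuclideanSpace.proj j (𝕜 := ℂ)).contDiff.restrict_scalars ℝ)).pow 2
  have hΦsupp : ∀ j, HasCompactSupport (Φ j) := by
    intro j
    obtain ⟨R, hR⟩ := hχc.isBounded.subset_closedBall 0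
    refine HasCompactSupport.intro
      (isCompact_closedBall (0 : EuclideanSpace ℂ (Fin n)) (Real.sqrt (max R 0)))
      fun z hz => ?_
    have h1 : Real.sqrt (max R 0) < ‖z‖ := by
      simpa [Metric.mem_closedBall, dist_zero_right, not_le] using hz
    have h2 : max R 0 < ‖z‖ ^ 2 := by
      have hs := Real.sq_sqrt (le_max_right R 0)
      nlinarith [Real.sqrt_nonneg (max R 0), norm_nonneg z]
    have h3 : ‖z‖ ^ 2 ∉ tsupport χ := by
      intro hmem
      have := hR hmem
      simp only [Metric.mem_closedBall, Real.dist_eq, sub_zero] at this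
      have : ‖z‖ ^ 2 ≤ R := le_trans (le_abs_self _) this
      have := le_max_left R 0
      linarith
    simp [hΦdef, image_eq_zero_of_notMem_tsupport h3]
  have hbd : ∀ j, ∃ C, ∀ x, ‖iteratedFDeriv ℝ 2 (Φ j) x‖ ≤ C := by
    intro j
    exact ((hΦdiff j).continuous_iteratedFDeriv (by exact WithTop.coe_le_coe.mpr le_top)).bounded_above_of_compact_support
      ((hΦsupp j).iteratedFDeriv 2)
  choose C hC using hbd
  have hCnn : ∀ j, 0 ≤ C j := fun j => le_trans (norm_nonneg _) (hC j 0)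
  have hSnn : 0 ≤ ∑ j : Fin n, C j := Finset.sum_nonneg fun j _ => hCnn j
  refine ⟨(∑ j : Fin n, C j) + 1, by linarith, ?_⟩
  intro ε hε δ hδ δmax hδmax0 hδmax z w
  set L : EuclideanSpace ℂ (Fin n) →L[ℝ] EuclideanSpace ℂ (Fin n) :=
    ε⁻¹ • ContinuousLinearMap.id ℝ _ with hLdef
  set c : Fin n → ℝ := fun j => if m ≤ (j : ℕ) then δ j else 0 with hcdef
  have hcnn : ∀ j, 0 ≤ c j := by
    intro j; simp only [hcdef]; split <;> [exact hδ j; exact le_refl 0]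
  have hcle : ∀ j, c j ≤ δmax := by
    intro j; simp only [hcdef]; split <;> [exact hδmax j; exact hδmax0]
  set F : Fin n → EuclideanSpace ℂ (Fin n) → ℝ :=
    fun j => (c j * ε ^ 2) • (Φ j ∘ L) with hFdef
  have hfeq : (fun z : EuclideanSpace ℂ (Fin n) => χ (‖z‖ ^ 2 / ε ^ 2) *
      ∑ j : Fin n, (if m ≤ (j : ℕ) then δ j * (z j).im ^ 2 else 0))
      = (∑ j : Fin n, F j ·) := by
    funext x
    rw [Finset.mul_sum]
    apply Finset.sum_congr rfl
    intro j _
    have hL : L x = ε⁻¹ • x := by simp [hLdef]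
    have hnorm : ‖ε⁻¹ • x‖ ^ 2 = ‖x‖ ^ 2 / ε ^ 2 := by
      rw [norm_smul, Real.norm_eq_abs, abs_inv, abs_of_pos hε, mul_pow]
      field_simp
    have him : ((ε⁻¹ • x) j).im = ε⁻¹ * (x j).im := by
      simp [PiLp.smul_apply, Complex.smul_im, smul_eq_mul]
    simp only [hFdef, Pi.smul_apply, Function.comp_apply, hL, hΦdef, hnorm, him,
      smul_eq_mul, hcdef]
    split
    · field_simp
    · ring
  have hΦL : ∀ j, ContDiff ℝ 2 (Φ j ∘ L) :=
    fun j => ((hΦdiff j).of_le (by exact WithTop.coe_le_coe.mpr le_top)).comp L.contDiff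
  have hFdiff : ∀ j, ContDiff ℝ 2 (F j) := by
    intro j
    show ContDiff ℝ 2 fun y => (c j * ε ^ 2) • (Φ j ∘ L) y
    exact (hΦL j).const_smul _
  have hT := iteratedFDeriv_sum (𝕜 := ℝ) (u := Finset.univ) (i := 2)
    (fun j _ => hFdiff j)
  have hLa : ∀ a : EuclideanSpace ℂ (Fin n), ‖L a‖ = ε⁻¹ * ‖a‖ := by
    intro a
    simp [hLdef, norm_smul, abs_of_pos hε]
  have key : ∀ a : EuclideanSpace ℂ (Fin n),
      |iteratedFDeriv ℝ 2 (∑ j : Fin n, F j ·) z ![a, a]|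
        ≤ δmax * (∑ j : Fin n, C j) * ‖a‖ ^ 2 := by
    intro a
    rw [hT]
    rw [Finset.sum_apply, ContinuousMultilinearMap.sum_apply]
    refine (Finset.abs_sum_le_sum_abs _ _).trans ?_
    have hterm : ∀ j : Fin n,
        |iteratedFDeriv ℝ 2 (F j) z ![a, a]| ≤ δmax * C j * ‖a‖ ^ 2 := by
      intro j
      have h1 : iteratedFDeriv ℝ 2 (F j) z
          = (c j * ε ^ 2) • iteratedFDeriv ℝ 2 (Φ j ∘ L) z :=
        iteratedFDeriv_const_smul_apply (hΦL j).contDiffAt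
      have h2 : iteratedFDeriv ℝ 2 (Φ j ∘ L) z
          = (iteratedFDeriv ℝ 2 (Φ j) (L z)).compContinuousLinearMap fun _ => L :=
        L.iteratedFDeriv_comp_right (hΦdiff j) z (by exact WithTop.coe_le_coe.mpr le_top)
      rw [h1, ContinuousMultilinearMap.smul_apply, h2,
        ContinuousMultilinearMap.compContinuousLinearMap_apply]
      have hop : ‖(iteratedFDeriv ℝ 2 (Φ j) (L z)) fun i => L (![a, a] i)‖
          ≤ C j * (ε⁻¹ * ‖a‖ * (ε⁻¹ * ‖a‖)) := by
        refine ((iteratedFDeriv ℝ 2 (Φ j) (L z)).le_opNorm _).trans ?_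
        have : (∏ i : Fin 2, ‖L (![a, a] i)‖) = ε⁻¹ * ‖a‖ * (ε⁻¹ * ‖a‖) := by
          rw [Fin.prod_univ_two]
          simp [hLa]
        rw [this]
        have h0 : (0:ℝ) ≤ ε⁻¹ * ‖a‖ * (ε⁻¹ * ‖a‖) := by positivity
        exact mul_le_mul_of_nonneg_right (hC j (L z)) h0
      rw [smul_eq_mul, abs_mul]
      have habs : |(iteratedFDeriv ℝ 2 (Φ j) (L z)) fun i => L (![a, a] i)|
          ≤ C j * (ε⁻¹ * ‖a‖ * (ε⁻¹ * ‖a‖)) := by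
        rw [← Real.norm_eq_abs]; exact hop
      have hcnn2 : (0:ℝ) ≤ c j * ε ^ 2 := mul_nonneg (hcnn j) (sq_nonneg ε)
      calc |c j * ε ^ 2| * |(iteratedFDeriv ℝ 2 (Φ j) (L z)) fun i => L (![a, a] i)|
          ≤ (c j * ε ^ 2) * (C j * (ε⁻¹ * ‖a‖ * (ε⁻¹ * ‖a‖))) := by
            rw [_root_.abs_of_nonneg hcnn2]
            exact mul_le_mul_of_nonneg_left habs hcnn2
        _ = c j * C j * ‖a‖ ^ 2 := by field_simp
        _ ≤ δmax * C j * ‖a‖ ^ 2 :=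
            mul_le_mul_of_nonneg_right
              (mul_le_mul_of_nonneg_right (hcle j) (hCnn j)) (sq_nonneg ‖a‖)
    calc ∑ j : Fin n, |iteratedFDeriv ℝ 2 (F j) z ![a, a]|
        ≤ ∑ j : Fin n, δmax * C j * ‖a‖ ^ 2 :=
          Finset.sum_le_sum fun j _ => hterm j
      _ = δmax * (∑ j : Fin n, C j) * ‖a‖ ^ 2 := by
          rw [← Finset.sum_mul, ← Finset.mul_sum]
  have hIw : ‖(Complex.I • w : EuclideanSpace ℂ (Fin n))‖ = ‖w‖ := by
    rw [norm_smul, Complex.norm_I, one_mul]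
  unfold leviForm
  rw [hfeq]
  have k1 := key w
  have k2 := key (Complex.I • w)
  rw [hIw] at k2
  have h1 := neg_abs_le (iteratedFDeriv ℝ 2 (∑ j : Fin n, F j ·) z ![w, w])
  have h2 := neg_abs_le (iteratedFDeriv ℝ 2 (∑ j : Fin n, F j ·) z
    ![Complex.I • w, Complex.I • w])
  have hw2 : (0:ℝ) ≤ δmax * ‖w‖ ^ 2 := by positivity
  have b1 : -(δmax * (∑ j : Fin n, C j) * ‖w‖ ^ 2)
      ≤ iteratedFDeriv ℝ 2 (∑ j : Fin n, F j ·) z ![w, w] :=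
    le_trans (neg_le_neg k1) h1
  have b2 : -(δmax * (∑ j : Fin n, C j) * ‖w‖ ^ 2)
      ≤ iteratedFDeriv ℝ 2 (∑ j : Fin n, F j ·) z ![Complex.I • w, Complex.I • w] :=
    le_trans (neg_le_neg k2) h2
  nlinarith [b1, b2, mul_nonneg hw2 hSnn, hw2]
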